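/- Let G be a connected graph with n vertices and minimum degree δ ≥ αn for a fixed α > 0, and let k < αn. Then s_{n−k}(G)/s_n(G) ≤ (1/(α^k k!)) · (1 − k/(αn))^{−k}. -/

import Mathlib

open SimpleGraph

/-- Number of subtrees of `G` with `m` vertices. -/
noncomputable def subtreeCount {V : Type*} [Fintype V] (G : SimpleGraph V) (m : ℕ) : ℕ :=
  {H : G.Subgraph | H.verts.ncard = m ∧ H.coe.IsTree}.ncard

/-!
Let `δ = αn` and let `N(H)` be the number of spanning trees containing a subtree `H`. If `H` misses
`j + 1` vertices, each missing vertex has at least `δ - j` neighbours in `H`, so at least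
`(j + 1)(δ - j)` darts enter `H` from outside. Adding one of them yields a subtree missing `j`
vertices, and a spanning tree `T ⊇ H` contains at most `j + 1` of these extensions (one per edge of
`T` outside `H`). Double counting and induction give `N(H) ≥ (δ - j)^j` whenever `H` misses
`j ≤ δ` vertices. Double counting pairs (subtree on `n - k` vertices, spanning tree above it) and
using that a subtree of a tree is determined by its vertex set then gives
`s_{n-k} (δ - k)^k ≤ s_n C(n, k) ≤ s_n n^k / k!`.
-/

namespace SimpleGraph.Subgraph

variable {V : Type*} {G : SimpleGraph V} {H K T : G.Subgraph}

lemma ncard_edgeSet_coe (H : G.Subgraph) : H.coe.edgeSet.ncard = H.edgeSet.ncard := by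
  rw [← image_coe_edgeSet_coe,
    Set.ncard_image_of_injective _ (Sym2.map.injective Subtype.val_injective)]

lemma isTree_coe_iff [Finite V] :
    H.coe.IsTree ↔ H.Connected ∧ H.edgeSet.ncard + 1 = H.verts.ncard := by
  rw [isTree_iff_connected_and_card, Nat.card_coe_set_eq, Nat.card_coe_set_eq,
    ncard_edgeSet_coe, Subgraph.connected_iff']

lemma isAcyclic_coe_of_le (hKT : K ≤ T) (hT : T.coe.IsAcyclic) : K.coe.IsAcyclic :=
  hT.comap (inclusion hKT) (inclusion.injective hKT)

lemma isTree_coe_sup_subgraphOfAdj [Finite V] {v w : V} (hH : H.coe.IsTree) (hadj : G.Adj v w)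
    (hv : v ∉ H.verts) (hw : w ∈ H.verts) : (H ⊔ G.subgraphOfAdj hadj).coe.IsTree := by
  obtain ⟨hconn, hcard⟩ := isTree_coe_iff.mp hH
  have hvw : s(v, w) ∉ H.edgeSet := fun h => hv (H.edge_vert h)
  refine isTree_coe_iff.mpr ⟨connected_sup hconn.preconnected
    (subgraphOfAdj_connected hadj).preconnected ⟨w, hw, by simp⟩, ?_⟩
  rw [edgeSet_sup, edgeSet_subgraphOfAdj, verts_sup, subgraphOfAdj_verts,
    Set.union_singleton, Set.ncard_insert_of_notMem hvw, Set.union_insert,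
    Set.union_singleton, Set.insert_eq_of_mem hw, Set.ncard_insert_of_notMem hv, hcard]

lemma ncard_edgeSet_diff_of_le [Finite V] (hHT : H ≤ T) (hH : H.coe.IsTree) (hT : T.coe.IsTree) :
    (T.edgeSet \ H.edgeSet).ncard = (T.verts \ H.verts).ncard := by
  have hH' := (isTree_coe_iff.mp hH).2
  have hT' := (isTree_coe_iff.mp hT).2
  rw [Set.ncard_sdiff (edgeSet_mono hHT), Set.ncard_sdiff hHT.1]
  omega

lemma eq_of_le_of_verts_eq [Finite V] (hHK : H ≤ K) (hH : H.coe.IsTree) (hK : K.coe.IsTree)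
    (hverts : H.verts = K.verts) : H = K := by
  have hdiff := ncard_edgeSet_diff_of_le hHK hH hK
  rw [hverts, Set.sdiff_self, Set.ncard_empty, Set.ncard_eq_zero, Set.sdiff_eq_empty] at hdiff
  exact le_antisymm hHK
    ⟨hverts.ge, fun _ _ h => Subgraph.mem_edgeSet.mp (hdiff (Subgraph.mem_edgeSet.mpr h))⟩

lemma eq_of_verts_eq_of_le [Finite V] {T₁ T₂ : G.Subgraph} (hT : T.coe.IsTree) (h₁ : T₁ ≤ T)
    (h₂ : T₂ ≤ T) (hT₁ : T₁.coe.IsTree) (hT₂ : T₂.coe.IsTree) (hverts : T₁.verts = T₂.verts) :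
    T₁ = T₂ := by
  have hsup : (T₁ ⊔ T₂).coe.IsTree := by
    refine ⟨(connected_sup (isTree_coe_iff.mp hT₁).1.preconnected
      (isTree_coe_iff.mp hT₂).1.preconnected ?_).coe,
      isAcyclic_coe_of_le (sup_le h₁ h₂) hT.isAcyclic⟩
    rw [verts_inf, hverts, Set.inter_self]
    exact (isTree_coe_iff.mp hT₂).1.nonempty
  have hsup_verts : (T₁ ⊔ T₂).verts = T₁.verts := by rw [verts_sup, hverts, Set.union_self]
  exact (eq_of_le_of_verts_eq le_sup_left hT₁ hsup hsup_verts.symm).trans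
    (eq_of_le_of_verts_eq le_sup_right hT₂ hsup (hsup_verts.trans hverts).symm).symm

end SimpleGraph.Subgraph

open Finset
open scoped Nat

namespace SimpleGraph

section Counting

open scoped Classical

variable {V : Type*} [Fintype V] {G : SimpleGraph V}

noncomputable def subtrees (G : SimpleGraph V) (m : ℕ) : Finset G.Subgraph :=
  {H | H.verts.ncard = m ∧ H.coe.IsTree}

noncomputable def spanningTreesAbove (H : G.Subgraph) : Finset G.Subgraph :=
  {T ∈ subtrees G (Fintype.card V) | H ≤ T}

noncomputable def boundaryDarts (H : G.Subgraph) : Finset G.Dart :=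
  {d | d.fst ∉ H.verts ∧ d.snd ∈ H.verts}

lemma subtreeCount_eq_card_subtrees (m : ℕ) : subtreeCount G m = #(subtrees G m) := by
  rw [subtreeCount, Set.ncard_eq_toFinset_card', Set.toFinset_ofPred, subtrees]

lemma card_boundaryDarts_ge {δ : ℝ} (hmin : ∀ v, δ ≤ (G.neighborSet v).ncard) {H : G.Subgraph}
    {j : ℕ} (hj : H.vertsᶜ.ncard = j + 1) : (j + 1) * (δ - j) ≤ #(boundaryDarts H) := by
  have hfiber : ∀ v ∈ H.vertsᶜ.toFinset, δ - j ≤ #{d ∈ boundaryDarts H | d.fst = v} := by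
    intro v hv
    rw [Set.mem_toFinset, Set.mem_compl_iff] at hv
    have hcover : G.neighborSet v ⊆
        (H.vertsᶜ \ {v}) ∪ ↑({d ∈ boundaryDarts H | d.fst = v}.image (·.snd)) := by
      intro w hw
      by_cases hwH : w ∈ H.verts
      · exact Or.inr (mem_image.mpr ⟨⟨(v, w), hw⟩, by simp [boundaryDarts, hv, hwH], rfl⟩)
      · exact Or.inl ⟨hwH, fun h => G.loopless.irrefl v (h ▸ hw : G.Adj v v)⟩
    have hcount := (Set.ncard_le_ncard hcover).trans (Set.ncard_union_le _ _)
    rw [Set.ncard_sdiff_singleton_of_mem hv, hj, Set.ncard_coe_finset] at hcount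
    have := (hmin v).trans (Nat.cast_le.mpr (hcount.trans (Nat.add_le_add_left card_image_le _)))
    push_cast at this
    linarith
  have hmaps : ∀ d ∈ boundaryDarts H, d.fst ∈ H.vertsᶜ.toFinset := fun d hd => by
    simpa [boundaryDarts] using (mem_filter.mp hd).2.1
  calc ((j : ℝ) + 1) * (δ - j) = ∑ _v ∈ H.vertsᶜ.toFinset, (δ - j) := by
        rw [sum_const, nsmul_eq_mul, ← Set.ncard_eq_toFinset_card', hj]; push_cast; ring
    _ ≤ ∑ v ∈ H.vertsᶜ.toFinset, (#{d ∈ boundaryDarts H | d.fst = v} : ℝ) := sum_le_sum hfiber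
    _ = #(boundaryDarts H) := by rw [card_eq_sum_card_fiberwise hmaps]; push_cast; rfl

lemma card_filter_boundaryDarts_le {H T : G.Subgraph} (hH : H.coe.IsTree) (hT : T.coe.IsTree)
    (hHT : H ≤ T) : #{d ∈ boundaryDarts H | H ⊔ G.subgraphOfAdj d.adj ≤ T} ≤ H.vertsᶜ.ncard := by
  calc #{d ∈ boundaryDarts H | H ⊔ G.subgraphOfAdj d.adj ≤ T}
      ≤ (T.edgeSet \ H.edgeSet).ncard := by
        rw [← Set.ncard_coe_finset]
        refine Set.ncard_le_ncard_of_injOn Dart.edge ?_ ?_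
        · intro d hd
          simp only [coe_filter, boundaryDarts, mem_filter, mem_univ, true_and,
            Set.mem_ofPred_eq] at hd
          exact ⟨Subgraph.edgeSet_mono hd.2 (Or.inr (by simp)),
            fun h => hd.1.1 (H.edge_vert (Subgraph.mem_edgeSet.mp h))⟩
        · intro d hd d' hd' hdd'
          simp only [coe_filter, boundaryDarts, mem_filter, mem_univ, true_and,
            Set.mem_ofPred_eq] at hd hd'
          refine ((dart_edge_eq_iff d d').mp hdd').resolve_right fun h => hd.1.1 ?_
          rw [h]
          exact hd'.1.2
    _ = (T.verts \ H.verts).ncard := Subgraph.ncard_edgeSet_diff_of_le hHT hH hT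
    _ ≤ H.vertsᶜ.ncard := Set.ncard_le_ncard (Set.sdiff_subset_compl _ _)

lemma ncard_compl_verts_sup_subgraphOfAdj {H : G.Subgraph} {d : G.Dart}
    (hd : d ∈ boundaryDarts H) : (H ⊔ G.subgraphOfAdj d.adj).vertsᶜ.ncard + 1 = H.vertsᶜ.ncard := by
  simp only [boundaryDarts, mem_filter, mem_univ, true_and] at hd
  rw [Subgraph.verts_sup, subgraphOfAdj_verts, Set.union_insert, Set.union_singleton,
    Set.insert_eq_of_mem hd.2]
  have h₁ := Set.ncard_add_ncard_compl (insert d.fst H.verts)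
  have h₂ := Set.ncard_add_ncard_compl H.verts
  rw [Set.ncard_insert_of_notMem hd.1] at h₁
  omega

theorem pow_le_card_spanningTreesAbove {δ : ℝ} (hmin : ∀ v, δ ≤ (G.neighborSet v).ncard) :
    ∀ (j : ℕ) (H : G.Subgraph), (j : ℝ) ≤ δ → H.coe.IsTree → H.vertsᶜ.ncard = j →
      (δ - j) ^ j ≤ #(spanningTreesAbove H)
  | 0, H, _, hH, hj => by
    have hspan : H.verts = Set.univ := by
      rwa [Set.ncard_eq_zero, Set.compl_empty_iff] at hj
    have hmem : H ∈ spanningTreesAbove H := by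
      simp [spanningTreesAbove, subtrees, hspan, hH]
    simpa using card_pos.mpr ⟨H, hmem⟩
  | j + 1, H, hjδ, hH, hj => by
    push_cast at hjδ ⊢
    have hext : ∀ d ∈ boundaryDarts H,
        (δ - j) ^ j ≤ #(spanningTreesAbove (H ⊔ G.subgraphOfAdj d.adj)) := fun d hd => by
      have hd' := hd
      simp only [boundaryDarts, mem_filter, mem_univ, true_and] at hd'
      refine pow_le_card_spanningTreesAbove hmin j _ (by linarith)
        (Subgraph.isTree_coe_sup_subgraphOfAdj hH d.adj hd'.1 hd'.2) ?_
      have := ncard_compl_verts_sup_subgraphOfAdj hd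
      omega
    have hdouble : #(boundaryDarts H) • (δ - j) ^ j ≤ #(spanningTreesAbove H) • ((j : ℝ) + 1) := by
      refine card_nsmul_le_card_nsmul (fun d T => H ⊔ G.subgraphOfAdj d.adj ≤ T)
        (fun d hd => (hext d hd).trans (Nat.cast_le.mpr (card_le_card fun T hT => ?_)))
        (fun T hT => ?_)
      · simp only [spanningTreesAbove, bipartiteAbove, mem_filter] at hT ⊢
        exact ⟨⟨hT.1, le_sup_left.trans hT.2⟩, hT.2⟩
      · simp only [spanningTreesAbove, subtrees, mem_filter, mem_univ, true_and] at hT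
        have := card_filter_boundaryDarts_le hH hT.1.2 hT.2
        rw [hj] at this
        exact_mod_cast this
    have hcross := card_boundaryDarts_ge hmin hj
    have hstep : ((j : ℝ) + 1) * (δ - j) ^ (j + 1) ≤ ((j : ℝ) + 1) * #(spanningTreesAbove H) :=
      calc ((j : ℝ) + 1) * (δ - j) ^ (j + 1) = ((j + 1) * (δ - j)) * (δ - j) ^ j := by ring
        _ ≤ #(boundaryDarts H) * (δ - j) ^ j :=
          mul_le_mul_of_nonneg_right hcross (pow_nonneg (by linarith) _)
        _ ≤ #(spanningTreesAbove H) * ((j : ℝ) + 1) := by simpa only [nsmul_eq_mul] using hdouble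
        _ = ((j : ℝ) + 1) * #(spanningTreesAbove H) := mul_comm _ _
    calc (δ - (j + 1)) ^ (j + 1) ≤ (δ - j) ^ (j + 1) :=
          pow_le_pow_left₀ (by linarith) (by linarith) _
      _ ≤ #(spanningTreesAbove H) := le_of_mul_le_mul_left hstep (by positivity)

lemma card_filter_subtrees_le_choose {T : G.Subgraph} (hT : T.coe.IsTree) (m : ℕ) :
    #{T' ∈ subtrees G m | T' ≤ T} ≤ (Fintype.card V).choose m := by
  rw [← card_univ, ← card_powersetCard]
  refine card_le_card_of_injOn (fun T' => T'.verts.toFinset) (fun T' hT' => ?_) ?_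
  · simp only [coe_filter, subtrees, mem_filter, mem_univ, true_and, Set.mem_ofPred_eq] at hT'
    rw [mem_coe, mem_powersetCard, ← Set.ncard_eq_toFinset_card']
    exact ⟨subset_univ _, hT'.1.1⟩
  · intro T₁ h₁ T₂ h₂ hverts
    simp only [coe_filter, subtrees, mem_filter, mem_univ, true_and, Set.mem_ofPred_eq] at h₁ h₂
    exact Subgraph.eq_of_verts_eq_of_le hT h₁.2 h₂.2 h₁.1.2 h₂.1.2 (Set.toFinset_inj.mp hverts)

theorem subtreeCount_mul_le {δ : ℝ} (hmin : ∀ v, δ ≤ (G.neighborSet v).ncard) {k : ℕ}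
    (hkδ : (k : ℝ) ≤ δ) (hkV : k ≤ Fintype.card V) :
    (subtreeCount G (Fintype.card V - k) : ℝ) * (k ! * (δ - k) ^ k) ≤
      subtreeCount G (Fintype.card V) * (Fintype.card V : ℝ) ^ k := by
  set n := Fintype.card V
  have hdouble : #(subtrees G (n - k)) • (δ - k) ^ k ≤ #(subtrees G n) • (n.choose k : ℝ) := by
    refine card_nsmul_le_card_nsmul (fun T' T => T' ≤ T) (fun T' hT' => ?_) (fun T hT => ?_)
    · simp only [subtrees, mem_filter, mem_univ, true_and] at hT'
      refine pow_le_card_spanningTreesAbove hmin k T' hkδ hT'.2 ?_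
      have := Set.ncard_add_ncard_compl T'.verts
      rw [hT'.1, Nat.card_eq_fintype_card] at this
      omega
    · simp only [subtrees, mem_filter, mem_univ, true_and] at hT
      have := card_filter_subtrees_le_choose hT.2 (n - k)
      rw [Nat.choose_symm hkV] at this
      exact_mod_cast this
  have hchoose : (k ! : ℝ) * n.choose k ≤ (n : ℝ) ^ k := by
    exact_mod_cast (Nat.descFactorial_eq_factorial_mul_choose n k).symm.trans_le
      (Nat.descFactorial_le_pow n k)
  rw [subtreeCount_eq_card_subtrees, subtreeCount_eq_card_subtrees]
  rw [nsmul_eq_mul, nsmul_eq_mul] at hdouble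
  calc (#(subtrees G (n - k)) : ℝ) * (k ! * (δ - k) ^ k)
      = k ! * (#(subtrees G (n - k)) * (δ - k) ^ k) := by ring
    _ ≤ k ! * (#(subtrees G n) * n.choose k) := by gcongr
    _ = #(subtrees G n) * (k ! * n.choose k) := by ring
    _ ≤ #(subtrees G n) * (n : ℝ) ^ k := by gcongr

end Counting

end SimpleGraph

theorem stmt10_general {V : Type*} [Fintype V] (G : SimpleGraph V)
    (α : ℝ)
    (hmin : ∀ v : V, α * (Fintype.card V : ℝ) ≤ ((G.neighborSet v).ncard : ℝ))
    (k : ℕ) (hkn : (k : ℝ) < α * (Fintype.card V : ℝ)) :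
    (subtreeCount G (Fintype.card V - k) : ℝ) / (subtreeCount G (Fintype.card V) : ℝ) ≤
      1 / (α ^ k * (Nat.factorial k : ℝ)) *
        (1 - (k : ℝ) / (α * (Fintype.card V : ℝ))) ^ (-(k : ℤ)) := by
  have hαn : 0 < α * Fintype.card V := k.cast_nonneg.trans_lt hkn
  have hα_ne : α ≠ 0 := left_ne_zero_of_mul hαn.ne'
  have hgap : 0 < α * Fintype.card V - k := sub_pos.mpr hkn
  obtain ⟨v⟩ : Nonempty V := Fintype.card_pos_iff.mp <| Nat.pos_of_ne_zero fun h => by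
    simp [h] at hαn
  have hkV : k ≤ Fintype.card V := by
    have hdeg : (G.neighborSet v).ncard < Fintype.card V := by
      rw [← Nat.card_eq_fintype_card]
      exact Set.ncard_lt_card fun h =>
        G.loopless.irrefl v (h ▸ Set.mem_univ v : v ∈ G.neighborSet v)
    exact_mod_cast (hkn.trans_le (hmin v)).le.trans (Nat.cast_le.mpr hdeg.le)
  have hrhs : 1 / (α ^ k * (k ! : ℝ)) * (1 - (k : ℝ) / (α * Fintype.card V)) ^ (-(k : ℤ)) =
      (Fintype.card V : ℝ) ^ k / (k ! * (α * Fintype.card V - k) ^ k) := by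
    rw [zpow_neg, zpow_natCast, one_sub_div hαn.ne', div_pow, inv_div, mul_pow]
    field_simp
  rw [hrhs]
  refine div_le_of_le_mul₀ (by positivity) (by positivity) ?_
  rw [div_mul_eq_mul_div, le_div_iff₀ (by positivity)]
  linarith [subtreeCount_mul_le hmin hkn.le hkV]

theorem stmt10 {V : Type*} [Fintype V] (G : SimpleGraph V) (hconn : G.Connected)
    (α : ℝ) (hα : 0 < α)
    (hmin : ∀ v : V, α * (Fintype.card V : ℝ) ≤ ((G.neighborSet v).ncard : ℝ))
    (k : ℕ) (hk : 0 < k) (hkn : (k : ℝ) < α * (Fintype.card V : ℝ)) :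
    (subtreeCount G (Fintype.card V - k) : ℝ) / (subtreeCount G (Fintype.card V) : ℝ) ≤
      1 / (α ^ k * (Nat.factorial k : ℝ)) *
        (1 - (k : ℝ) / (α * (Fintype.card V : ℝ))) ^ (-(k : ℤ)) :=
  stmt10_general G α hmin k hkn
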